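/- arXiv:1008.0825 — 3 statements merged into one kernel-verified Lean document; each statement's English description precedes it below -/
import Mathlib

section
/- Let n be a positive integer. There exists γ ∈ SL(2, ℤ[i]) with ‖γ‖² = n if and only if there exist integers y₁, …, y₈ satisfying the three equations y₃² + y₄² + y₅² + y₆² = n − 2, y₁² + y₂² + y₇² + y₈² = n + 2, and y₁y₅ + y₂y₆ − y₃y₇ − y₄y₈ = 0, together with the parity conditions y₁ ≡ y₄ (mod 2), y₂ ≡ y₃ (mod 2), y₅ ≡ y₈ (mod 2), y₆ ≡ y₇ (mod 2). The correspondence is given by writing γ = [[a₁ + i a₂, b₁ + i b₂], [c₁ + i c₂, d₁ + i d₂]] and setting y₁ = a₁ + d₁, y₄ = a₁ − d₁, y₃ = b₁ + c₁, y₂ = b₁ − c₁, y₅ = a₂ + d₂, y₈ = a₂ − d₂, y₇ = b₂ + c₂, y₆ = b₂ − c₂. -/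
open Matrix

set_option maxHeartbeats 2000000 in
/-- For a positive integer `n`, there is `γ ∈ SL(2, ℤ[i])` with `‖γ‖² = n` iff there
are integers `y₁, …, y₈` with `y₃² + y₄² + y₅² + y₆² = n − 2`,
`y₁² + y₂² + y₇² + y₈² = n + 2`, `y₁y₅ + y₂y₆ − y₃y₇ − y₄y₈ = 0`, and the parity
conditions `y₁ ≡ y₄`, `y₂ ≡ y₃`, `y₅ ≡ y₈`, `y₆ ≡ y₇ (mod 2)` (coming from the
substitution `y₁ = a₁ + d₁`, `y₄ = a₁ − d₁`, `y₃ = b₁ + c₁`, `y₂ = b₁ − c₁`,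
`y₅ = a₂ + d₂`, `y₈ = a₂ − d₂`, `y₇ = b₂ + c₂`, `y₆ = b₂ − c₂`). -/
theorem sl2_gaussian_norm_sq_iff_system (n : ℤ) (hn : 0 < n) :
    (∃ γ : Matrix.SpecialLinearGroup (Fin 2) GaussianInt,
        Zsqrtd.norm (γ.1 0 0) + Zsqrtd.norm (γ.1 0 1) +
          Zsqrtd.norm (γ.1 1 0) + Zsqrtd.norm (γ.1 1 1) = n)
      ↔
    (∃ y₁ y₂ y₃ y₄ y₅ y₆ y₇ y₈ : ℤ,
        y₃ ^ 2 + y₄ ^ 2 + y₅ ^ 2 + y₆ ^ 2 = n - 2 ∧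
        y₁ ^ 2 + y₂ ^ 2 + y₇ ^ 2 + y₈ ^ 2 = n + 2 ∧
        y₁ * y₅ + y₂ * y₆ - y₃ * y₇ - y₄ * y₈ = 0 ∧
        y₁ ≡ y₄ [ZMOD 2] ∧ y₂ ≡ y₃ [ZMOD 2] ∧ y₅ ≡ y₈ [ZMOD 2] ∧ y₆ ≡ y₇ [ZMOD 2]) := by
  constructor
  · rintro ⟨γ, hγ⟩
    have hdet : (γ.1).det = 1 := γ.2
    rw [Matrix.det_fin_two] at hdet
    set a := γ.1 0 0
    set b := γ.1 0 1
    set c := γ.1 1 0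
    set d := γ.1 1 1
    have hre : a.re * d.re + (-1) * a.im * d.im - (b.re * c.re + (-1) * b.im * c.im) = 1 := by
      have := congrArg Zsqrtd.re hdet
      simpa [Zsqrtd.re_mul] using this
    have him : a.re * d.im + a.im * d.re - (b.re * c.im + b.im * c.re) = 0 := by
      have := congrArg Zsqrtd.im hdet
      simpa [Zsqrtd.im_mul] using this
    have hnorm : (a.re^2 + a.im^2) + (b.re^2 + b.im^2) + (c.re^2 + c.im^2)
        + (d.re^2 + d.im^2) = n := by
      simpa [Zsqrtd.norm, sq] using hγ
    refine ⟨a.re + d.re, b.re - c.re, b.re + c.re, a.re - d.re,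
      a.im + d.im, b.im - c.im, b.im + c.im, a.im - d.im, ?_, ?_, ?_, ?_, ?_, ?_, ?_⟩
    · nlinarith [hre, hnorm]
    · nlinarith [hre, hnorm]
    · nlinarith [him]
    · simp only [Int.ModEq]; omega
    · simp only [Int.ModEq]; omega
    · simp only [Int.ModEq]; omega
    · simp only [Int.ModEq]; omega
  · rintro ⟨y₁, y₂, y₃, y₄, y₅, y₆, y₇, y₈, h1, h2, h3, p1, p2, p3, p4⟩
    obtain ⟨d₁, hd₁⟩ : (2:ℤ) ∣ y₁ - y₄ := (Int.modEq_iff_dvd.mp p1.symm)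
    obtain ⟨c₁, hc₁⟩ : (2:ℤ) ∣ y₃ - y₂ := (Int.modEq_iff_dvd.mp p2)
    obtain ⟨d₂, hd₂⟩ : (2:ℤ) ∣ y₅ - y₈ := (Int.modEq_iff_dvd.mp p3.symm)
    obtain ⟨c₂, hc₂⟩ : (2:ℤ) ∣ y₇ - y₆ := (Int.modEq_iff_dvd.mp p4)
    -- halves
    obtain ⟨a₁, e1, e4⟩ : ∃ a₁, y₁ = a₁ + d₁ ∧ y₄ = a₁ - d₁ := ⟨y₄ + d₁, by omega, by omega⟩
    obtain ⟨b₁, e3, e2⟩ : ∃ b₁, y₃ = b₁ + c₁ ∧ y₂ = b₁ - c₁ := ⟨y₂ + c₁, by omega, by omega⟩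
    obtain ⟨a₂, e5, e8⟩ : ∃ a₂, y₅ = a₂ + d₂ ∧ y₈ = a₂ - d₂ := ⟨y₈ + d₂, by omega, by omega⟩
    obtain ⟨b₂, e7, e6⟩ : ∃ b₂, y₇ = b₂ + c₂ ∧ y₆ = b₂ - c₂ := ⟨y₆ + c₂, by omega, by omega⟩
    subst e1 e2 e3 e4 e5 e6 e7 e8
    have hdet : (!![(⟨a₁, a₂⟩ : GaussianInt), ⟨b₁, b₂⟩; ⟨c₁, c₂⟩, ⟨d₁, d₂⟩]).det = 1 := by
      rw [Matrix.det_fin_two_of]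
      ext
      · simp only [Zsqrtd.re_mul, Zsqrtd.re_sub, Zsqrtd.re_one]
        nlinarith [h1, h2]
      · simp only [Zsqrtd.im_mul, Zsqrtd.im_sub, Zsqrtd.im_one]
        nlinarith [h3]
    refine ⟨⟨_, hdet⟩, ?_⟩
    simp only [Matrix.SpecialLinearGroup.coe_mk, Matrix.of_apply, Matrix.cons_val',
      Matrix.cons_val_zero, Matrix.cons_val_one, Matrix.head_cons, Matrix.empty_val',
      Matrix.cons_val_fin_one, Matrix.head_fin_const, Zsqrtd.norm]
    nlinarith [h1, h2]
end

section
/- For every odd integer n, the number of 2×4 matrices X over ℤ/8ℤ satisfying X·Xᵀ = G_n (mod 8) equals 49152; equivalently, the dyadic local density γ_2(F, G_n) = 8^{−5} · #{X (mod 8) : X·Xᵀ ≡ G_n (mod 8)} equals 3/2. -/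
open Matrix Finset

/-! Auxiliary setup: we count matrices `X` by their four columns. Each column
`c = (x, y)` contributes `(x², xy, y²)` to the triple of entries of `X * Xᵀ`. -/

private abbrev V8 := ZMod 8 × ZMod 8
private abbrev W8 := ZMod 8 × ZMod 8 × ZMod 8

private def phi8 (c : V8) : W8 := (c.1 * c.1, c.1 * c.2, c.2 * c.2)

private def psi8 (q : V8 × V8) : W8 := phi8 q.1 + phi8 q.2

private def t1 : List (List (List ℕ)) :=
  [[[4, 4, 0, 0, 4, 0, 0, 0], [0, 0, 0, 0, 0, 0, 0, 0], [0, 0, 0, 0, 0, 0, 0, 0], [0, 0, 0, 0, 0, 0, 0, 0], [0, 4, 0, 0, 0, 0, 0, 0], [0, 0, 0, 0, 0, 0, 0, 0], [0, 0, 0, 0, 0, 0, 0, 0], [0, 0, 0, 0, 0, 0, 0, 0]], [[4, 0, 0, 0, 0, 0, 0, 0], [0, 4, 0, 0, 0, 0, 0, 0], [0, 0, 0, 0, 4, 0, 0, 0], [0, 4, 0, 0, 0, 0, 0, 0], [4, 0, 0, 0, 0, 0, 0, 0], [0, 4, 0, 0, 0, 0, 0, 0], [0, 0, 0, 0, 4,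 0, 0, 0], [0, 4, 0, 0, 0, 0, 0, 0]], [[0, 0, 0, 0, 0, 0, 0, 0], [0, 0, 0, 0, 0, 0, 0, 0], [0, 0, 0, 0, 0, 0, 0, 0], [0, 0, 0, 0, 0, 0, 0, 0], [0, 0, 0, 0, 0, 0, 0, 0], [0, 0, 0, 0, 0, 0, 0, 0], [0, 0, 0, 0, 0, 0, 0, 0], [0, 0, 0, 0, 0, 0, 0, 0]], [[0, 0, 0, 0, 0, 0, 0, 0], [0, 0, 0, 0, 0, 0, 0, 0], [0, 0, 0, 0, 0, 0, 0, 0], [0, 0, 0, 0, 0, 0, 0, 0], [0, 0, 0, 0, 0, 0, 0, 0], [0, 0, 0, 0, 0, 0, 0, 0], [0, 0, 0, 0, 0, 0, 0, 0], [0, 0, 0, 0, 0, 0, 0, 0]], [[4, 0, 0, 0, 0, 0, 0, 0], [0, 0, 0, 0, 0, 0, 0, 0], [0, 4, 0, 0, 0, 0, 0, 0], [0, 0, 0, 0, 0, 0, 0, 0], [0, 0, 0, 0, 4, 0, 0, 0], [0, 0, 0, 0, 0, 0, 0, 0], [0, 4, 0, 0, 0, 0, 0, 0], [0, 0, 0,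 0, 0, 0, 0, 0]], [[0, 0, 0, 0, 0, 0, 0, 0], [0, 0, 0, 0, 0, 0, 0, 0], [0, 0, 0, 0, 0, 0, 0, 0], [0, 0, 0, 0, 0, 0, 0, 0], [0, 0, 0, 0, 0, 0, 0, 0], [0, 0, 0, 0, 0, 0, 0, 0], [0, 0, 0, 0, 0, 0, 0, 0], [0, 0, 0, 0, 0, 0, 0, 0]], [[0, 0, 0, 0, 0, 0, 0, 0], [0, 0, 0, 0, 0, 0, 0, 0], [0, 0, 0, 0, 0, 0, 0, 0], [0, 0, 0, 0, 0, 0, 0, 0], [0, 0, 0, 0, 0, 0, 0, 0], [0, 0, 0, 0, 0, 0, 0, 0], [0, 0, 0, 0, 0, 0, 0, 0], [0, 0, 0, 0, 0, 0, 0, 0]], [[0, 0, 0, 0, 0, 0, 0, 0], [0, 0, 0, 0, 0, 0, 0, 0], [0, 0, 0, 0, 0, 0, 0, 0], [0, 0, 0, 0, 0, 0, 0, 0], [0, 0, 0, 0, 0, 0, 0, 0], [0, 0, 0, 0, 0, 0, 0, 0], [0, 0, 0, 0, 0, 0, 0, 0], [0, 0, 0, 0, 0, 0, 0, 0]]]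
private def t2 : List (List (List ℕ)) :=
  [[[64, 32, 64, 0, 32, 32, 0, 0], [0, 0, 0, 0, 0, 0, 0, 0], [0, 32, 0, 0, 0, 32, 0, 0], [0, 0, 0, 0, 0, 0, 0, 0], [0, 32, 64, 0, 32, 32, 0, 0], [0, 0, 0, 0, 0, 0, 0, 0], [0, 32, 0, 0, 0, 32, 0, 0], [0, 0, 0, 0, 0, 0, 0, 0]], [[32, 64, 0, 0, 32, 0, 0, 0], [0, 32, 64, 0, 0, 32, 0, 0], [32, 0, 0, 0, 32, 64, 0, 0], [0, 32, 64, 0, 0, 32, 0, 0], [32, 64, 0, 0, 32, 0, 0, 0], [0, 32, 64, 0, 0, 32, 0, 0], [32, 0, 0, 0, 32, 64, 0, 0], [0, 32, 64, 0, 0, 32, 0, 0]], [[64, 0, 64, 0, 0, 0, 0, 0], [0, 64, 0, 0, 0, 64, 0, 0], [0, 0, 64, 0, 64, 0, 0, 0], [0, 64, 0, 0, 0, 64, 0, 0], [64, 0, 64, 0, 0, 0, 0, 0], [0, 64, 0, 0, 0, 64, 0, 0], [0, 0, 64, 0, 64, 0, 0, 0], [0, 64, 0, 0, 0, 64, 0,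 0]], [[0, 0, 0, 0, 0, 0, 0, 0], [0, 0, 0, 0, 0, 0, 0, 0], [0, 0, 0, 0, 0, 0, 0, 0], [0, 0, 0, 0, 0, 0, 0, 0], [0, 0, 0, 0, 0, 0, 0, 0], [0, 0, 0, 0, 0, 0, 0, 0], [0, 0, 0, 0, 0, 0, 0, 0], [0, 0, 0, 0, 0, 0, 0, 0]], [[32, 32, 0, 0, 32, 32, 0, 0], [0, 0, 0, 0, 0, 0, 0, 0], [0, 32, 64, 0, 0, 32, 0, 0], [0, 0, 0, 0, 0, 0, 0, 0], [32, 32, 0, 0, 32, 32, 0, 0], [0, 0, 0, 0, 0, 0, 0, 0], [0, 32, 64, 0, 0, 32, 0, 0], [0, 0, 0, 0, 0, 0, 0, 0]], [[32, 0, 0, 0, 32, 64, 0, 0], [0, 32, 64, 0, 0, 32, 0, 0], [32, 64, 0, 0, 32, 0, 0, 0], [0, 32, 64, 0, 0, 32, 0, 0], [32, 0, 0, 0, 32, 64, 0, 0], [0, 32, 64, 0, 0, 32, 0, 0], [32, 64, 0, 0, 32, 0, 0, 0], [0, 32, 64, 0, 0, 32, 0, 0]], [[0, 0, 0, 0, 0,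 0, 0, 0], [0, 0, 0, 0, 0, 0, 0, 0], [0, 0, 0, 0, 0, 0, 0, 0], [0, 0, 0, 0, 0, 0, 0, 0], [0, 0, 0, 0, 0, 0, 0, 0], [0, 0, 0, 0, 0, 0, 0, 0], [0, 0, 0, 0, 0, 0, 0, 0], [0, 0, 0, 0, 0, 0, 0, 0]], [[0, 0, 0, 0, 0, 0, 0, 0], [0, 0, 0, 0, 0, 0, 0, 0], [0, 0, 0, 0, 0, 0, 0, 0], [0, 0, 0, 0, 0, 0, 0, 0], [0, 0, 0, 0, 0, 0, 0, 0], [0, 0, 0, 0, 0, 0, 0, 0], [0, 0, 0, 0, 0, 0, 0, 0], [0, 0, 0, 0, 0, 0, 0, 0]]]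

private def c1t (w : W8) : ℕ := ((t1.getD w.1.val []).getD w.2.1.val []).getD w.2.2.val 0
private def c2t (w : W8) : ℕ := ((t2.getD w.1.val []).getD w.2.1.val []).getD w.2.2.val 0

private def S1 : Finset W8 :=
  {(0, 0, 0), (0, 0, 1), (0, 0, 4), (0, 4, 1), (1, 0, 0), (1, 1, 1), (1, 2, 4), (1, 3, 1), (1, 4, 0), (1, 5, 1), (1, 6, 4), (1, 7, 1), (4, 0, 0), (4, 2, 1), (4, 4, 4), (4, 6, 1)}

private def S2 : Finset W8 :=
  {(0, 0, 0), (0, 0, 1), (0, 0, 2), (0, 0, 4), (0, 0, 5), (0, 2, 1), (0, 2, 5), (0, 4, 1), (0, 4, 2), (0, 4, 4), (0, 4, 5), (0, 6, 1), (0, 6, 5), (1, 0, 0), (1, 0, 1), (1, 0, 4), (1, 1, 1), (1, 1, 2), (1, 1, 5), (1, 2, 0), (1, 2, 4), (1, 2, 5), (1, 3, 1), (1, 3, 2), (1, 3, 5), (1, 4, 0), (1, 4, 1), (1, 4, 4), (1, 5, 1), (1, 5, 2), (1, 5, 5), (1, 6, 0), (1, 6, 4), (1, 6, 5), (1, 7,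 1), (1, 7, 2), (1, 7, 5), (2, 0, 0), (2, 0, 2), (2, 1, 1), (2, 1, 5), (2, 2, 2), (2, 2, 4), (2, 3, 1), (2, 3, 5), (2, 4, 0), (2, 4, 2), (2, 5, 1), (2, 5, 5), (2, 6, 2), (2, 6, 4), (2, 7, 1), (2, 7, 5), (4, 0, 0), (4, 0, 1), (4, 0, 4), (4, 0, 5), (4, 2, 1), (4, 2, 2), (4, 2, 5), (4, 4, 0), (4, 4, 1), (4, 4, 4), (4, 4, 5), (4, 6, 1), (4, 6, 2), (4, 6, 5), (5, 0, 0), (5, 0, 4), (5, 0, 5), (5, 1, 1), (5, 1, 2), (5, 1, 5), (5, 2, 0), (5, 2, 1), (5, 2, 4), (5, 3, 1), (5, 3, 2), (5, 3, 5), (5, 4, 0), (5, 4, 4), (5, 4, 5), (5, 5, 1), (5, 5, 2), (5, 5, 5), (5, 6, 0), (5, 6, 1), (5, 6, 4), (5, 7, 1), (5, 7, 2), (5, 7, 5)}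

/-- Generic convolution counting lemma. -/
private lemma conv_count {A W : Type*} [Fintype A] [DecidableEq W] [AddCommGroup W] [Fintype W]
    (f : A → W) (g : W) :
    (univ.filter fun p : A × A => f p.1 + f p.2 = g).card
      = ∑ w : W, (univ.filter fun a : A => f a = w).card *
          (univ.filter fun a : A => f a = g - w).card := by
  classical
  rw [Finset.card_eq_sum_card_fiberwise
    (f := fun p : A × A => f p.1) (t := univ) (fun x _ => mem_univ _)]
  refine Finset.sum_congr rfl fun w _ => ?_
  rw [Finset.filter_filter]
  have : (univ.filter fun p : A × A => (f p.1 + f p.2 = g) ∧ f p.1 = w)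
      = (univ.filter fun a : A => f a = w) ×ˢ (univ.filter fun a : A => f a = g - w) := by
    ext p
    simp only [mem_filter, mem_univ, true_and, Finset.mem_product]
    constructor
    · rintro ⟨h1, h2⟩
      exact ⟨h2, by rw [← h1, h2]; abel⟩
    · rintro ⟨h1, h2⟩
      refine ⟨?_, h1⟩
      rw [h1, h2]; abel
  rw [this, Finset.card_product]

/-- The equivalence between `2 × 4` matrices and quadruples of columns. -/
private def colEquiv : Matrix (Fin 2) (Fin 4) (ZMod 8) ≃ (V8 × V8) × (V8 × V8) where
  toFun X := (((X 0 0, X 1 0), (X 0 1, X 1 1)), ((X 0 2, X 1 2), (X 0 3, X 1 3)))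
  invFun p := !![p.1.1.1, p.1.2.1, p.2.1.1, p.2.2.1;
                 p.1.1.2, p.1.2.2, p.2.1.2, p.2.2.2]
  left_inv X := by
    ext i j
    fin_cases i <;> fin_cases j <;> rfl
  right_inv p := rfl

private lemma cond_iff (a : ZMod 8) (X : Matrix (Fin 2) (Fin 4) (ZMod 8)) :
    X * Xᵀ = !![a + 2, 0; 0, a - 2] ↔
      psi8 (colEquiv X).1 + psi8 (colEquiv X).2 = (a + 2, 0, a - 2) := by
  constructor
  · intro h
    have h00 := congrFun (congrFun h 0) 0
    have h01 := congrFun (congrFun h 0) 1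
    have h11 := congrFun (congrFun h 1) 1
    simp [Matrix.mul_apply, Fin.sum_univ_four] at h00 h01 h11
    refine Prod.ext ?_ (Prod.ext ?_ ?_) <;>
      simp [psi8, phi8, colEquiv, Prod.fst_add, Prod.snd_add]
    · linear_combination h00
    · linear_combination h01
    · linear_combination h11
  · intro h
    obtain ⟨h1, h2, h3⟩ : _ ∧ _ ∧ _ := by
      simpa [Prod.ext_iff, psi8, phi8, colEquiv] using h
    ext i j
    fin_cases i <;> fin_cases j <;>
      simp [Matrix.mul_apply, Fin.sum_univ_four]
    · linear_combination h1
    · linear_combination h2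
    · linear_combination h2
    · linear_combination h3

set_option maxRecDepth 100000 in
set_option maxHeartbeats 16000000 in
private lemma c1_eq : ∀ w : W8, (univ.filter fun c : V8 => phi8 c = w).card = c1t w := by
  decide

set_option maxRecDepth 100000 in
set_option maxHeartbeats 16000000 in
private lemma c1_zero : ∀ u : W8, u ∉ S1 → c1t u = 0 := by decide

set_option maxRecDepth 100000 in
set_option maxHeartbeats 16000000 in
private lemma c2_zero : ∀ w : W8, w ∉ S2 → c2t w = 0 := by decide

set_option maxRecDepth 100000 in
set_option maxHeartbeats 16000000 in
private lemma c2_eq : ∀ w : W8, (∑ u ∈ S1, c1t u * c1t (w - u)) = c2t w := by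
  decide

set_option maxRecDepth 100000 in
set_option maxHeartbeats 16000000 in
private lemma key8 : ∀ c : ZMod 8,
    (∑ w ∈ S2, c2t w * c2t ((2 * c + 1 + 2, 0, 2 * c + 1 - 2) - w)) = 49152 := by
  decide

private lemma psi_count (w : W8) :
    (univ.filter fun q : V8 × V8 => psi8 q = w).card = c2t w := by
  show (univ.filter fun q : V8 × V8 => phi8 q.1 + phi8 q.2 = w).card = c2t w
  rw [conv_count phi8 w]
  simp only [c1_eq]
  rw [← Finset.sum_subset (Finset.subset_univ S1)
    (fun u _ hu => by rw [c1_zero u hu, zero_mul])]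
  exact c2_eq w

private lemma count_eq (a : ZMod 8) :
    Nat.card {X : Matrix (Fin 2) (Fin 4) (ZMod 8) // X * Xᵀ = !![a + 2, 0; 0, a - 2]}
      = ∑ w ∈ S2, c2t w * c2t ((a + 2, 0, a - 2) - w) := by
  rw [Nat.card_congr (Equiv.subtypeEquiv (q := fun p : (V8 × V8) × (V8 × V8) => psi8 p.1 + psi8 p.2 = ((a + 2, 0, a - 2) : W8))
    colEquiv (cond_iff a)), Nat.card_eq_fintype_card,
    Fintype.card_subtype]
  rw [conv_count psi8 ((a + 2, 0, a - 2) : W8)]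
  simp only [psi_count]
  rw [← Finset.sum_subset (Finset.subset_univ S2)
    (fun w _ hw => by rw [c2_zero w hw, zero_mul])]

/-- Dyadic local density: for every odd integer `n`, the number of `2 × 4` matrices
`X` over `ℤ/8ℤ` with `X Xᵀ = Gₙ = diag(n+2, n−2) (mod 8)` equals `49152`
(equivalently, `γ₂(F, Gₙ) = 49152 / 8⁵ = 3/2`). -/
theorem dyadic_count_mod_eight (n : ℤ) (hodd : Odd n) :
    Nat.card {X : Matrix (Fin 2) (Fin 4) (ZMod 8) //
        X * Xᵀ = !![(n : ZMod 8) + 2, 0; 0, (n : ZMod 8) - 2]} = 49152 := by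
  obtain ⟨k, hk⟩ := hodd
  have ha : (n : ZMod 8) = 2 * (k : ZMod 8) + 1 := by
    rw [hk]; push_cast; ring
  rw [count_eq ((n : ZMod 8)), ha]
  exact key8 (k : ZMod 8)
end

section
/- For every odd integer n ≥ 3, every prime p, and every integer t ≥ 1, there exists a 2×4 matrix X over ℤ/p^tℤ satisfying X·Xᵀ = G_n (mod p^t); that is, none of the local densities γ_p(F, G_n) vanish, so there is no local obstruction to representing the binary form G_n by the sum-of-squares form in 8 variables. -/
open Matrix

section padic

variable {p : ℕ} [Fact p.Prime]

/-- Square roots in `ℤ_[p]` via Hensel's lemma. -/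
lemma padic_sqrt (c a : ℤ_[p]) (h : ‖c - a ^ 2‖ < ‖2 * a‖ ^ 2) :
    ∃ x : ℤ_[p], x ^ 2 = c := by
  have hd : (Polynomial.X ^ 2 - Polynomial.C c : Polynomial ℤ_[p]).derivative
      = Polynomial.C 2 * Polynomial.X := by
    simp [Polynomial.derivative_pow]
  have hnorm : ‖(Polynomial.X ^ 2 - Polynomial.C c : Polynomial ℤ_[p]).eval a‖ <
      ‖(Polynomial.X ^ 2 - Polynomial.C c : Polynomial ℤ_[p]).derivative.eval a‖ ^ 2 := by
    rw [hd]
    simpa [norm_sub_rev] using h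
  obtain ⟨z, hz, -⟩ := hensels_lemma hnorm
  have : z ^ 2 - c = 0 := by simpa using hz
  exact ⟨z, sub_eq_zero.mp this⟩

end padic

section padic2

variable {p : ℕ} [Fact p.Prime]

lemma toZMod_eq_zero_iff' (w : ℤ_[p]) : PadicInt.toZMod w = 0 ↔ ‖w‖ < 1 := by
  rw [← RingHom.mem_ker, PadicInt.ker_toZMod, PadicInt.maximalIdeal_eq_span_p,
    Ideal.mem_span_singleton, ← PadicInt.norm_lt_one_iff_dvd]

lemma norm_two_padic (hp2 : p ≠ 2) : ‖(2 : ℤ_[p])‖ = 1 := by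
  have h2 : ((2 : ℤ) : ℤ_[p]) = 2 := by push_cast; ring
  have hnd : ¬ ((p : ℤ) ∣ 2) := by
    intro hd
    have hd2 : p ∣ 2 := by exact_mod_cast hd
    exact hp2 ((Nat.prime_dvd_prime_iff_eq (Fact.out) Nat.prime_two).mp hd2)
  have hlt : ¬ ‖(2 : ℤ_[p])‖ < 1 := by
    rw [← h2, PadicInt.norm_int_lt_one_iff_dvd]; exact hnd
  exact le_antisymm (PadicInt.norm_le_one _) (not_lt.mp hlt)

lemma unit_two_sq (hp2 : p ≠ 2) {u : ℤ_[p]} (hu : IsUnit u) :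
    ∃ x y : ℤ_[p], x ^ 2 + y ^ 2 = u := by
  obtain ⟨a, b, hab⟩ := ZMod.sq_add_sq p (PadicInt.toZMod u)
  set x0 : ℤ_[p] := ((a.val : ℕ) : ℤ_[p]) with hx0def
  set y0 : ℤ_[p] := ((b.val : ℕ) : ℤ_[p]) with hy0def
  have hx0 : PadicInt.toZMod x0 = a := by
    simp [hx0def, map_natCast, ZMod.natCast_val, ZMod.cast_id]
  have hy0 : PadicInt.toZMod y0 = b := by
    simp [hy0def, map_natCast, ZMod.natCast_val, ZMod.cast_id]
  have key : ‖u - (x0 ^ 2 + y0 ^ 2)‖ < 1 := by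
    rw [← toZMod_eq_zero_iff']
    simp [map_sub, map_add, map_pow, hx0, hy0, hab]
  have hun : ‖u‖ = 1 := PadicInt.isUnit_iff.mp hu
  have hxy : ‖x0‖ = 1 ∨ ‖y0‖ = 1 := by
    by_contra hcon
    push_neg at hcon
    obtain ⟨h1, h2⟩ := hcon
    have hx1 : ‖x0‖ < 1 := lt_of_le_of_ne (PadicInt.norm_le_one _) h1
    have hy1 : ‖y0‖ < 1 := lt_of_le_of_ne (PadicInt.norm_le_one _) h2
    have : ‖u‖ < 1 := by
      calc ‖u‖ = ‖(u - (x0 ^ 2 + y0 ^ 2)) + (x0 ^ 2 + y0 ^ 2)‖ := by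
              rw [sub_add_cancel]
        _ ≤ max ‖u - (x0 ^ 2 + y0 ^ 2)‖ ‖x0 ^ 2 + y0 ^ 2‖ := PadicInt.nonarchimedean _ _
        _ < 1 := by
            apply max_lt key
            calc ‖x0 ^ 2 + y0 ^ 2‖ ≤ max ‖x0 ^ 2‖ ‖y0 ^ 2‖ := PadicInt.nonarchimedean _ _
              _ < 1 := by
                  apply max_lt <;> rw [norm_pow] <;> nlinarith [norm_nonneg x0, norm_nonneg y0]
    rw [hun] at this; exact lt_irrefl _ this
  have h2 : ‖(2 : ℤ_[p])‖ = 1 := norm_two_padic hp2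
  rcases hxy with hx | hy
  · obtain ⟨x, hx⟩ := padic_sqrt (u - y0 ^ 2) x0 (by
      rw [norm_mul, h2, hx]
      have e : u - y0 ^ 2 - x0 ^ 2 = u - (x0 ^ 2 + y0 ^ 2) := by ring
      rw [e]
      simpa using key)
    exact ⟨x, y0, by rw [hx]; ring⟩
  · obtain ⟨y, hyy⟩ := padic_sqrt (u - x0 ^ 2) y0 (by
      rw [norm_mul, h2, hy]
      have : u - x0 ^ 2 - y0 ^ 2 = u - (x0 ^ 2 + y0 ^ 2) := by ring
      rw [this]
      simpa using key)
    exact ⟨x0, y, by rw [hyy]; ring⟩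

end padic2

section padic3

variable {p : ℕ} [Fact p.Prime]

lemma three_sq (hp2 : p ≠ 2) (c : ℤ_[p]) :
    ∃ x y z : ℤ_[p], x ^ 2 + y ^ 2 + z ^ 2 = c := by
  by_cases hc : IsUnit c
  · obtain ⟨x, y, hxy⟩ := unit_two_sq hp2 hc
    exact ⟨x, y, 0, by rw [← hxy]; ring⟩
  · have hc1 : IsUnit (c - 1) := by
      rw [PadicInt.isUnit_iff]
      by_contra hcon
      have h1 : ‖c - 1‖ < 1 :=
        lt_of_le_of_ne (PadicInt.norm_le_one _) hcon
      have h2 : ‖c‖ < 1 := PadicInt.mem_nonunits.mp hc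
      have : ‖(1 : ℤ_[p])‖ < 1 := by
        calc ‖(1 : ℤ_[p])‖ = ‖c - (c - 1)‖ := by ring_nf
          _ ≤ max ‖c‖ ‖1 - c‖ := by
              have e : c - (c - 1) = c + (-(c - 1)) := by ring
              rw [e]
              simpa using PadicInt.nonarchimedean c (-(c - 1))
          _ < 1 := max_lt h2 (by rwa [norm_sub_rev] at h1)
      simp at this
    obtain ⟨x, y, hxy⟩ := unit_two_sq hp2 hc1
    exact ⟨x, y, 1, by rw [← sub_add_cancel c 1, ← hxy]; ring⟩

lemma two_adic_sqrt (c : ℤ_[2]) (h : (8 : ℤ_[2]) ∣ c - 1) :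
    ∃ x : ℤ_[2], x ^ 2 = c := by
  apply padic_sqrt c 1
  obtain ⟨k, hk⟩ := h
  have h8 : ‖(8 : ℤ_[2])‖ = 1 / 8 := by
    have : (8 : ℤ_[2]) = (2 : ℤ_[2]) ^ 3 := by norm_num
    rw [this, norm_pow]
    have h2 : ‖(2 : ℤ_[2])‖ = 1 / 2 := by
      have : ((2 : ℕ) : ℤ_[2]) = 2 := by norm_num
      rw [← this, PadicInt.norm_p (p := 2)]
      norm_num
    rw [h2]; norm_num
  have hle : ‖c - 1 ^ 2‖ ≤ 1 / 8 := by
    have e : c - 1 ^ 2 = c - 1 := by ring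
    rw [e, hk, norm_mul, h8]
    have := PadicInt.norm_le_one k
    nlinarith [norm_nonneg k]
  have h2 : ‖(2 : ℤ_[2]) * 1‖ = 1 / 2 := by
    rw [mul_one]
    have : ((2 : ℕ) : ℤ_[2]) = 2 := by norm_num
    rw [← this, PadicInt.norm_p (p := 2)]
    norm_num
  rw [h2]
  calc ‖c - 1 ^ 2‖ ≤ 1 / 8 := hle
    _ < (1 / 2) ^ 2 := by norm_num

end padic3

section quat

variable {R : Type*} [CommRing R]

lemma quat_mat (x0 x1 x2 x3 r1 r2 r3 a b : R)
    (ha : x0 ^ 2 + x1 ^ 2 + x2 ^ 2 + x3 ^ 2 = a)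
    (hb : a * (r1 ^ 2 + r2 ^ 2 + r3 ^ 2) = b) :
    ∃ X : Matrix (Fin 2) (Fin 4) R, X * Xᵀ = !![a, 0; 0, b] := by
  refine ⟨!![x0, x1, x2, x3;
      -(x1*r1+x2*r2+x3*r3), x0*r1+x2*r3-x3*r2, x0*r2+x3*r1-x1*r3, x0*r3+x1*r2-x2*r1], ?_⟩
  subst ha hb
  ext i j
  fin_cases i <;> fin_cases j <;>
    simp [Matrix.mul_apply, Fin.sum_univ_four, Matrix.transpose_apply, Matrix.vecHead, Matrix.vecTail] <;> ring

lemma quat_mat' (x0 x1 x2 x3 r1 r2 r3 a b : R)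
    (hb : x0 ^ 2 + x1 ^ 2 + x2 ^ 2 + x3 ^ 2 = b)
    (ha : b * (r1 ^ 2 + r2 ^ 2 + r3 ^ 2) = a) :
    ∃ X : Matrix (Fin 2) (Fin 4) R, X * Xᵀ = !![a, 0; 0, b] := by
  refine ⟨!![-(x1*r1+x2*r2+x3*r3), x0*r1+x2*r3-x3*r2, x0*r2+x3*r1-x1*r3, x0*r3+x1*r2-x2*r1;
      x0, x1, x2, x3], ?_⟩
  subst hb ha
  ext i j
  fin_cases i <;> fin_cases j <;>
    simp [Matrix.mul_apply, Fin.sum_univ_four, Matrix.transpose_apply, Matrix.vecHead, Matrix.vecTail] <;> ring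

end quat

lemma isUnit_int_cast {p : ℕ} [Fact p.Prime] (k : ℤ) (h : ¬ (p : ℤ) ∣ k) :
    IsUnit ((k : ℤ_[p])) := by
  rw [PadicInt.isUnit_iff]
  refine le_antisymm (PadicInt.norm_le_one _) (not_lt.mp ?_)
  rw [PadicInt.norm_int_lt_one_iff_dvd]
  exact h

/-- Existence over the `p`-adic integers. -/
lemma padic_exists (n : ℤ) (hodd : Odd n) (p : ℕ) [Fact p.Prime] :
    ∃ Y : Matrix (Fin 2) (Fin 4) ℤ_[p],
      Y * Yᵀ = !![((n + 2 : ℤ) : ℤ_[p]), 0; 0, ((n - 2 : ℤ) : ℤ_[p])] := by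
  obtain ⟨m, hm⟩ := hodd
  set a : ℤ_[p] := ((n + 2 : ℤ) : ℤ_[p]) with ha_def
  set b : ℤ_[p] := ((n - 2 : ℤ) : ℤ_[p]) with hb_def
  rcases eq_or_ne p 2 with hp2 | hp2
  · subst hp2
    -- a = n + 2 is a 2-adic unit
    have ha_unit : IsUnit a := isUnit_int_cast _ (by omega)
    -- find the three auxiliary squares based on n % 8
    have h8 : n % 8 = 1 ∨ n % 8 = 3 ∨ n % 8 = 5 ∨ n % 8 = 7 := by omega
    obtain ⟨c1, c2, c3, hs⟩ : ∃ c1 c2 c3 : ℤ,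
        (8 : ℤ) ∣ n + 1 - (c1 ^ 2 + c2 ^ 2 + c3 ^ 2) := by
      rcases h8 with h | h | h | h
      · exact ⟨1, 1, 0, by omega⟩
      · exact ⟨2, 0, 0, by omega⟩
      · exact ⟨1, 1, 2, by omega⟩
      · exact ⟨0, 0, 0, by omega⟩
    obtain ⟨x0, hx0⟩ := two_adic_sqrt
        (a - (((c1 : ℤ) : ℤ_[2]) ^ 2 + ((c2 : ℤ) : ℤ_[2]) ^ 2 + ((c3 : ℤ) : ℤ_[2]) ^ 2)) (by
      have : ((8 : ℤ) : ℤ_[2]) ∣ ((n + 1 - (c1 ^ 2 + c2 ^ 2 + c3 ^ 2) : ℤ) : ℤ_[2]) :=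
        Int.cast_dvd_cast _ _ hs
      have e8 : ((8 : ℤ) : ℤ_[2]) = (8 : ℤ_[2]) := by push_cast; ring
      rw [e8] at this
      convert this using 1
      push_cast [ha_def]
      ring)
    obtain ⟨v, hv⟩ := ha_unit.exists_right_inv
    set c : ℤ_[2] := v * b with hc_def
    have hac : a * c = b := by rw [hc_def, ← mul_assoc, hv, one_mul]
    have hc5 : (8 : ℤ_[2]) ∣ c - 5 := by
      have h1 : (8 : ℤ_[2]) ∣ a * (c - 5) := by
        have e : a * (c - 5) = b - 5 * a := by rw [mul_sub, hac]; ring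
        rw [e]
        have hdd : (8 : ℤ) ∣ (n - 2 - 5 * (n + 2)) := by omega
        have : ((8 : ℤ) : ℤ_[2]) ∣ ((n - 2 - 5 * (n + 2) : ℤ) : ℤ_[2]) :=
          Int.cast_dvd_cast _ _ hdd
        have e8 : ((8 : ℤ) : ℤ_[2]) = (8 : ℤ_[2]) := by push_cast; ring
        rw [e8] at this
        convert this using 1
        push_cast [ha_def, hb_def]
        ring
      have e2 : c - 5 = v * (a * (c - 5)) := by rw [← mul_assoc, mul_comm v a, hv, one_mul]
      rw [e2]
      exact Dvd.dvd.mul_left h1 v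
    obtain ⟨z, hz⟩ := two_adic_sqrt (c - 4) (by
      have e : c - 4 - 1 = c - 5 := by ring
      rw [e]; exact hc5)
    refine quat_mat x0 ((c1 : ℤ) : ℤ_[2]) ((c2 : ℤ) : ℤ_[2]) ((c3 : ℤ) : ℤ_[2]) z 2 0 a b
      (by rw [hx0]; ring) ?_
    have : z ^ 2 + 2 ^ 2 + 0 ^ 2 = c := by rw [hz]; ring
    rw [this, hac]
  · -- p odd
    by_cases hdvd : (p : ℤ) ∣ (n + 2)
    · -- then b = n - 2 is a unit
      have hnd : ¬ (p : ℤ) ∣ (n - 2) := by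
        intro hd
        have h4 : (p : ℤ) ∣ 4 := by
          have := dvd_sub hdvd hd
          simpa using this
        have h4' : p ∣ 4 := by exact_mod_cast h4
        have h22 : p ∣ 2 ^ 2 := by rw [show (2 : ℕ) ^ 2 = 4 from rfl]; exact h4'
        have : p ∣ 2 := (Fact.out : p.Prime).dvd_of_dvd_pow h22
        exact hp2 ((Nat.prime_dvd_prime_iff_eq (Fact.out) Nat.prime_two).mp this)
      have hb_unit : IsUnit b := isUnit_int_cast _ hnd
      obtain ⟨x, y, hxy⟩ := unit_two_sq hp2 hb_unit
      obtain ⟨v, hv⟩ := hb_unit.exists_right_inv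
      obtain ⟨r1, r2, r3, hr⟩ := three_sq hp2 (v * a)
      refine quat_mat' x y 0 0 r1 r2 r3 a b (by rw [← hxy]; ring) ?_
      rw [hr, ← mul_assoc, hv, one_mul]
    · have ha_unit : IsUnit a := isUnit_int_cast _ hdvd
      obtain ⟨x, y, hxy⟩ := unit_two_sq hp2 ha_unit
      obtain ⟨v, hv⟩ := ha_unit.exists_right_inv
      obtain ⟨r1, r2, r3, hr⟩ := three_sq hp2 (v * b)
      refine quat_mat x y 0 0 r1 r2 r3 a b (by rw [← hxy]; ring) ?_
      rw [hr, ← mul_assoc, hv, one_mul]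

/-- No local obstructions: for every odd integer `n ≥ 3`, every prime `p` and every
`t ≥ 1`, there is a `2 × 4` matrix `X` over `ℤ/p^tℤ` with
`X Xᵀ = Gₙ = diag(n+2, n−2) (mod p^t)`; in particular no local density
`γ_p(F, Gₙ)` vanishes. -/
theorem no_local_obstruction (n : ℤ) (hodd : Odd n) (hn : 3 ≤ n)
    (p : ℕ) (hp : p.Prime) (t : ℕ) (ht : 1 ≤ t) :
    ∃ X : Matrix (Fin 2) (Fin 4) (ZMod (p ^ t)),
      X * Xᵀ = !![(n : ZMod (p ^ t)) + 2, 0; 0, (n : ZMod (p ^ t)) - 2] := by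
  haveI : Fact p.Prime := ⟨hp⟩
  obtain ⟨Y, hY⟩ := padic_exists n hodd p
  set f : ℤ_[p] →+* ZMod (p ^ t) := PadicInt.toZModPow t with hf
  refine ⟨Y.map f, ?_⟩
  have h1 : (Y.map f) * (Y.map f)ᵀ = (Y * Yᵀ).map f := by
    rw [← Matrix.transpose_map, Matrix.map_mul]
  rw [h1, hY]
  ext i j
  fin_cases i <;> fin_cases j <;>
    simp [Matrix.map_apply, map_intCast, map_ofNat] <;> push_cast <;> ring
end
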